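/- For n ≥ 3 and any (p,q) ∈ [n]², the sum of F_{n,ℓ}(i,j) over all (i,j) ∈ [n]² with i+j = p+q equals 0, and the sum over all (i,j) with i-j = p-q equals 0; i.e., F_{n,ℓ} sums to zero along every diagonal and anti-diagonal of the board. -/

import Mathlib

open Finset Matrix

/-- The vector `C_{n,ℓ}` (1-based coordinates: the square of `v` is `(v.1+1, v.2+1)`). -/
noncomputable def Cvec (n : ℕ) (l : ℤ) (v : Fin n × Fin n) : ℝ :=
  if (v.2 : ℤ) + 1 = l ∨ (v.2 : ℤ) + 1 = (n : ℤ) + 1 - l then 1 else 0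

/-- The vector `R_{n,ℓ}`. -/
noncomputable def Rvec (n : ℕ) (l : ℤ) (v : Fin n × Fin n) : ℝ :=
  if (v.1 : ℤ) + 1 = l ∨ (v.1 : ℤ) + 1 = (n : ℤ) + 1 - l then -1 else 0

/-- The vector `F_{n,ℓ} = C_{n,ℓ} + R_{n,ℓ}`. -/
noncomputable def Fvec (n : ℕ) (l : ℤ) (v : Fin n × Fin n) : ℝ :=
  Cvec n l v + Rvec n l v

/-
The summands cancel in pairs. The transpose `(i, j) ↦ (j, i)` exchanges `C_{n,ℓ}` with `-R_{n,ℓ}`,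
so it negates `F_{n,ℓ}`, and it preserves every anti-diagonal. The point reflection
`(i, j) ↦ (n+1-i, n+1-j)` fixes `F_{n,ℓ}`, because `{ℓ, n+1-ℓ}` is stable under `k ↦ n+1-k`;
composed with the transpose it negates `F_{n,ℓ}` and preserves every diagonal.
-/

theorem Finset.sum_eq_zero_of_involutive_of_neg {ι M : Type*} [AddCommGroup M]
    [IsAddTorsionFree M] {s : Finset ι} {f : ι → M} {g : ι → ι} (hg : Function.Involutive g)
    (hs : ∀ a ∈ s, g a ∈ s) (hf : ∀ a ∈ s, f (g a) = -f a) : ∑ x ∈ s, f x = 0 :=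
  sum_involution (fun a _ => g a) (fun a ha => by rw [hf a ha, add_neg_cancel])
    (fun a ha hne hfix => hne (by rw [← neg_eq_self, ← hf a ha, hfix])) hs (fun a _ => hg a)

theorem Fin.intCast_rev_add_one {n : ℕ} (i : Fin n) :
    ((i.rev : ℕ) : ℤ) + 1 = n + 1 - ((i : ℤ) + 1) := by
  have := i.isLt
  rw [Fin.val_rev]
  omega

section Fvec

variable {n : ℕ} {l : ℤ}

theorem Cvec_swap (v : Fin n × Fin n) : Cvec n l v.swap = -Rvec n l v := by
  simp only [Cvec, Rvec, Prod.snd_swap]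
  split_ifs <;> norm_num

theorem Rvec_swap (v : Fin n × Fin n) : Rvec n l v.swap = -Cvec n l v := by
  rw [← Prod.swap_swap v, Cvec_swap, Prod.swap_swap, neg_neg]

theorem Fvec_swap (v : Fin n × Fin n) : Fvec n l v.swap = -Fvec n l v := by
  rw [Fvec, Fvec, Cvec_swap, Rvec_swap, neg_add, add_comm]

theorem mirror_rev_iff (i : Fin n) :
    ((i.rev : ℤ) + 1 = l ∨ (i.rev : ℤ) + 1 = n + 1 - l) ↔
      ((i : ℤ) + 1 = l ∨ (i : ℤ) + 1 = n + 1 - l) := by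
  rw [Fin.intCast_rev_add_one]
  omega

theorem Fvec_map_rev (v : Fin n × Fin n) :
    Fvec n l (Prod.map Fin.rev Fin.rev v) = Fvec n l v := by
  simp only [Fvec, Cvec, Rvec, Prod.map_fst, Prod.map_snd, mirror_rev_iff]

end Fvec

theorem stmt11_general (n : ℕ) (l : ℤ) (p q : Fin n) :
    (∑ v ∈ Finset.univ.filter
        (fun v : Fin n × Fin n =>
          ((v.1 : ℤ) + 1) + ((v.2 : ℤ) + 1) = ((p : ℤ) + 1) + ((q : ℤ) + 1)),
        Fvec n l v) = 0 ∧
    (∑ v ∈ Finset.univ.filter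
        (fun v : Fin n × Fin n =>
          ((v.1 : ℤ) + 1) - ((v.2 : ℤ) + 1) = ((p : ℤ) + 1) - ((q : ℤ) + 1)),
        Fvec n l v) = 0 := by
  constructor
  · refine sum_eq_zero_of_involutive_of_neg Prod.swap_swap (fun v hv => ?_)
      (fun v _ => Fvec_swap v)
    simp only [mem_filter, mem_univ, true_and, Prod.fst_swap, Prod.snd_swap] at hv ⊢
    omega
  · refine sum_eq_zero_of_involutive_of_neg (g := fun v => (Prod.map Fin.rev Fin.rev v).swap)
      (fun v => Prod.ext v.1.rev_rev v.2.rev_rev) (fun v hv => ?_)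
      (fun v _ => by rw [Fvec_swap, Fvec_map_rev])
    simp only [mem_filter, mem_univ, true_and, Prod.fst_swap, Prod.snd_swap,
      Prod.map_fst, Prod.map_snd, Fin.intCast_rev_add_one] at hv ⊢
    omega

/-- `F_{n,ℓ}` sums to zero along every diagonal and antidiagonal. -/
theorem stmt11 (n : ℕ) (hn : 3 ≤ n) (l : ℤ) (hl1 : 1 ≤ l) (hl2 : l ≤ (n : ℤ))
    (p q : Fin n) :
    (∑ v ∈ Finset.univ.filter
        (fun v : Fin n × Fin n =>
          ((v.1 : ℤ) + 1) + ((v.2 : ℤ) + 1) = ((p : ℤ) + 1) + ((q : ℤ) + 1)),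
        Fvec n l v) = 0 ∧
    (∑ v ∈ Finset.univ.filter
        (fun v : Fin n × Fin n =>
          ((v.1 : ℤ) + 1) - ((v.2 : ℤ) + 1) = ((p : ℤ) + 1) - ((q : ℤ) + 1)),
        Fvec n l v) = 0 :=
  stmt11_general n l p q
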